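/- Let d = 1, I = [-1/2,1/2] ⊂ ℝ, f = g = 1_I, h̄ = 4·1_{I×I}, and c(x,y) = (1/2)|x−y|². Define S := ([-1/2,-1/4]×[-1/2,-1/4]) ∪ ([-1/4,0]×[-1/4,0]) ∪ ([0,1/4]×[0,1/4]) ∪ ([1/4,1/2]×[1/4,1/2]) and h := 4·1_S. Then h ∈ Γ(f,g)^h̄, but h does NOT minimize I_c over Γ(f,g)^h̄: there exists k ∈ Γ(f,g)^h̄ with I_c(k) < I_c(h). -/

import Mathlib

/-!
Both densities are, up to null sets, step functions on a uniform grid of `[-1/2, 1/2)`, given by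
a matrix of cell values. Their marginals are then read off the row and column sums, and a pair
of cells `(i, j)` of side `w` costs `w⁴/2 · ((i - j)² + 1/6)`. On the grid of twelve cells the
four squares are the `3 × 3` diagonal blocks, with `∑ (i - j)² = 48` over their 36 cells; the
banded pattern `bandPattern`, again with three cells of value `4` in every row and column, has
`∑ (i - j)² = 38` instead, which gives cost `11/2592 < 1/192`.
-/

open MeasureTheory Filter Set Topology

noncomputable section

/-- The transportation cost `I_c(h) = ∫∫ c(x,y) h(x,y) dx dy` on `ℝ × ℝ`. -/
def Icost1 (c h : ℝ × ℝ → ℝ) : ℝ :=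
  ∫ p, c p * h p

/-- `h ∈ Γ(f,g)`: `h` is a nonnegative integrable joint density on `ℝ × ℝ`
with marginals `f` and `g`. -/
def InGamma1 (f g : ℝ → ℝ) (h : ℝ × ℝ → ℝ) : Prop :=
  Integrable h volume ∧ (∀ᵐ p ∂volume, 0 ≤ h p) ∧
    (∀ᵐ x ∂volume, (∫ y, h (x, y)) = f x) ∧
    (∀ᵐ y ∂volume, (∫ x, h (x, y)) = g y)

/-- `h ∈ Γ(f,g)^h̄`: `h ∈ Γ(f,g)` and `h` is dominated by `h̄` a.e. -/
def InGammaBar1 (f g : ℝ → ℝ) (hbar h : ℝ × ℝ → ℝ) : Prop :=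
  InGamma1 f g h ∧ ∀ᵐ p ∂volume, h p ≤ hbar p

lemma InGammaBar1.congr_ae {f g : ℝ → ℝ} {hbar h h' : ℝ × ℝ → ℝ}
    (hh : InGammaBar1 f g hbar h) (e : h =ᵐ[volume] h') : InGammaBar1 f g hbar h' := by
  obtain ⟨⟨hint, hnonneg, hf, hg⟩, hle⟩ := hh
  have e_prod : h =ᵐ[(volume : Measure ℝ).prod volume] h' := by rwa [← Measure.volume_eq_prod]
  have e_swap : h ∘ Prod.swap =ᵐ[(volume : Measure ℝ).prod volume] h' ∘ Prod.swap :=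
    Measure.measurePreserving_swap.quasiMeasurePreserving.ae_eq e_prod
  refine ⟨⟨hint.congr e, ?_, ?_, ?_⟩, ?_⟩
  · filter_upwards [hnonneg, e] with p hp hpe
    rwa [← hpe]
  · filter_upwards [hf, Measure.ae_ae_of_ae_prod e_prod] with x hx hex
    rw [← hx]
    exact integral_congr_ae (hex.mono fun _ hy => hy.symm)
  · filter_upwards [hg, Measure.ae_ae_of_ae_prod e_swap] with y hy hey
    rw [← hy]
    exact integral_congr_ae (hey.mono fun _ hx => hx.symm)
  · filter_upwards [hle, e] with p hp hpe
    rwa [← hpe]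

lemma Icost1_congr_ae (c : ℝ × ℝ → ℝ) {h h' : ℝ × ℝ → ℝ} (e : h =ᵐ[volume] h') :
    Icost1 c h = Icost1 c h' :=
  integral_congr_ae (e.mono fun p hp => by simp only [hp])

lemma integral_pow_mul_indicator_Ico {a b : ℝ} (hab : a ≤ b) (k : ℕ) :
    ∫ x, x ^ k * (Ico a b).indicator 1 x = (b ^ (k + 1) - a ^ (k + 1)) / (k + 1) := by
  simp_rw [← indicator_mul_right _ (fun x : ℝ => x ^ k) 1, Pi.one_apply, mul_one]
  rw [integral_indicator measurableSet_Ico, integral_Ico_eq_integral_Ioo,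
    ← integral_Ioc_eq_integral_Ioo, ← intervalIntegral.integral_of_le hab, integral_pow]

lemma integrable_pow_mul_indicator_Ico (a b : ℝ) (k : ℕ) :
    Integrable fun x : ℝ => x ^ k * (Ico a b).indicator 1 x := by
  simp_rw [← indicator_mul_right _ (fun x : ℝ => x ^ k) 1, Pi.one_apply, mul_one]
  exact (integrable_indicator_iff measurableSet_Ico).2
    ((continuous_pow k).integrableOn_Icc.mono_set Ico_subset_Icc_self)

lemma halfSqDist_mul_prod_eq (u v : ℝ → ℝ) :
    (fun p : ℝ × ℝ => 1 / 2 * |p.1 - p.2| ^ 2 * (u p.1 * v p.2)) = fun p =>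
      1 / 2 * ((p.1 ^ 2 * u p.1) * (p.2 ^ 0 * v p.2))
        - (p.1 ^ 1 * u p.1) * (p.2 ^ 1 * v p.2)
        + 1 / 2 * ((p.1 ^ 0 * u p.1) * (p.2 ^ 2 * v p.2)) := by
  funext p
  rw [sq_abs]
  ring

lemma integrable_halfSqDist_mul_indicator_Ico_prod (a b c d : ℝ) :
    Integrable fun p : ℝ × ℝ =>
      1 / 2 * |p.1 - p.2| ^ 2 * ((Ico a b).indicator 1 p.1 * (Ico c d).indicator 1 p.2) := by
  rw [halfSqDist_mul_prod_eq, Measure.volume_eq_prod]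
  have moment (k l : ℕ) := (integrable_pow_mul_indicator_Ico a b k).mul_prod
    (integrable_pow_mul_indicator_Ico c d l)
  exact (((moment 2 0).const_mul _).sub (moment 1 1)).add ((moment 0 2).const_mul _)

lemma integral_halfSqDist_mul_indicator_Ico_prod {a b c d : ℝ} (hab : a ≤ b) (hcd : c ≤ d) :
    ∫ p : ℝ × ℝ,
        1 / 2 * |p.1 - p.2| ^ 2 * ((Ico a b).indicator 1 p.1 * (Ico c d).indicator 1 p.2)
      = ((b - c) ^ 4 - (a - c) ^ 4 - (b - d) ^ 4 + (a - d) ^ 4) / 24 := by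
  rw [halfSqDist_mul_prod_eq, Measure.volume_eq_prod]
  have moment (k l : ℕ) := (integrable_pow_mul_indicator_Ico a b k).mul_prod
    (integrable_pow_mul_indicator_Ico c d l)
  rw [integral_add ?sub ((moment 0 2).const_mul _), integral_sub ((moment 2 0).const_mul _)
    (moment 1 1), integral_const_mul, integral_const_mul]
  have fubini (k l : ℕ) := integral_prod_mul (μ := volume) (ν := volume)
    (fun x => x ^ k * (Ico a b).indicator 1 x) (fun y => y ^ l * (Ico c d).indicator 1 y)
  rw [fubini, fubini, fubini]
  simp only [integral_pow_mul_indicator_Ico hab, integral_pow_mul_indicator_Ico hcd]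
  · push_cast
    ring
  · exact ((moment 2 0).const_mul _).sub (moment 1 1)

def gridCell (a w : ℝ) (i : ℕ) : Set ℝ :=
  Ico (a + i * w) (a + (i + 1) * w)

def gridDensity (a w : ℝ) {n : ℕ} (M : Matrix (Fin n) (Fin n) ℝ) (p : ℝ × ℝ) : ℝ :=
  ∑ i, ∑ j, M i j * ((gridCell a w i).indicator 1 p.1 * (gridCell a w j).indicator 1 p.2)

section Grid

variable {a w : ℝ} {n : ℕ}

lemma measurableSet_gridCell (a w : ℝ) (i : ℕ) : MeasurableSet (gridCell a w i) :=
  measurableSet_Ico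

lemma volume_real_gridCell (hw : 0 ≤ w) (i : ℕ) : volume.real (gridCell a w i) = w := by
  rw [gridCell, Real.volume_real_Ico_of_le (by nlinarith)]
  ring

lemma integrable_indicator_gridCell (a w : ℝ) (i : ℕ) :
    Integrable ((gridCell a w i).indicator (1 : ℝ → ℝ)) :=
  (integrable_indicator_iff (measurableSet_gridCell a w i)).2
    (integrableOn_const measure_Ico_lt_top.ne)

lemma pairwise_disjoint_gridCell (hw : 0 ≤ w) :
    Pairwise (Function.onFun Disjoint (gridCell a w)) := by
  intro i j hij
  wlog hlt : i < j generalizing i j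
  · exact (this hij.symm (by omega)).symm
  have hij' : (i : ℝ) + 1 ≤ j := by exact_mod_cast hlt
  exact Ico_disjoint_Ico.2 ((min_le_left _ _).trans (le_trans (by nlinarith) (le_max_right _ _)))

lemma sum_indicator_gridCell (hw : 0 ≤ w) (n : ℕ) (x : ℝ) :
    ∑ i ∈ Finset.range n, (gridCell a w i).indicator (1 : ℝ → ℝ) x =
      (Ico a (a + n * w)).indicator 1 x := by
  induction n with
  | zero => simp
  | succ n ih =>
    have hunion : Ico a (a + n * w) ∪ gridCell a w n = Ico a (a + (n + 1 : ℕ) * w) := by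
      have hn : (0 : ℝ) ≤ n * w := by positivity
      rw [gridCell, Ico_union_Ico_eq_Ico (by linarith) (by linarith)]
      push_cast
      ring_nf
    have hdisj : Disjoint (Ico a (a + n * w)) (gridCell a w n) := Ico_disjoint_Ico_same
    rw [Finset.sum_range_succ, ih, ← hunion, indicator_union_of_disjoint hdisj]

lemma gridDensity_transpose (M : Matrix (Fin n) (Fin n) ℝ) (x y : ℝ) :
    gridDensity a w M.transpose (y, x) = gridDensity a w M (x, y) := by
  simp only [gridDensity, Matrix.transpose_apply]
  rw [Finset.sum_comm]
  simp only [mul_comm ((gridCell a w _).indicator 1 y)]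

lemma integrable_gridDensity (a w : ℝ) (M : Matrix (Fin n) (Fin n) ℝ) :
    Integrable (gridDensity a w M) := by
  rw [Measure.volume_eq_prod]
  exact integrable_finsetSum _ fun i _ => integrable_finsetSum _ fun j _ =>
    ((integrable_indicator_gridCell a w i).mul_prod
      (integrable_indicator_gridCell a w j)).const_mul _

lemma integral_gridDensity_snd (hw : 0 ≤ w) (M : Matrix (Fin n) (Fin n) ℝ) (x : ℝ) :
    ∫ y, gridDensity a w M (x, y) = ∑ i, (w * ∑ j, M i j) * (gridCell a w i).indicator 1 x := by
  simp only [gridDensity, ← mul_assoc]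
  have hint (i j : Fin n) : Integrable fun y =>
      M i j * (gridCell a w i).indicator 1 x * (gridCell a w j).indicator (1 : ℝ → ℝ) y :=
    (integrable_indicator_gridCell a w j).const_mul _
  rw [integral_finsetSum _ fun i _ => integrable_finsetSum _ fun j _ => hint i j]
  refine Finset.sum_congr rfl fun i _ => ?_
  rw [integral_finsetSum _ fun j _ => hint i j, Finset.mul_sum, Finset.sum_mul]
  refine Finset.sum_congr rfl fun j _ => ?_
  rw [integral_const_mul, integral_indicator_one (measurableSet_gridCell a w j),
    volume_real_gridCell hw]
  ring

lemma integral_gridDensity_snd_of_sum_row (hw : 0 ≤ w) {M : Matrix (Fin n) (Fin n) ℝ}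
    (hrow : ∀ i, w * ∑ j, M i j = 1) (x : ℝ) :
    ∫ y, gridDensity a w M (x, y) = (Ico a (a + n * w)).indicator 1 x := by
  simp only [integral_gridDensity_snd hw, hrow, one_mul]
  exact (Fin.sum_univ_eq_sum_range (fun i => (gridCell a w i).indicator 1 x) n).trans
    (sum_indicator_gridCell hw n x)

lemma gridDensity_nonneg {M : Matrix (Fin n) (Fin n) ℝ} (hM : ∀ i j, 0 ≤ M i j) (p : ℝ × ℝ) :
    0 ≤ gridDensity a w M p :=
  Finset.sum_nonneg fun i _ => Finset.sum_nonneg fun j _ => mul_nonneg (hM i j)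
    (mul_nonneg (indicator_nonneg (fun _ _ => zero_le_one) _)
      (indicator_nonneg (fun _ _ => zero_le_one) _))

lemma gridDensity_le (hw : 0 ≤ w) {M : Matrix (Fin n) (Fin n) ℝ} {c : ℝ}
    (hM : ∀ i j, M i j ≤ c) (p : ℝ × ℝ) :
    gridDensity a w M p ≤ c * (Ico a (a + n * w) ×ˢ Ico a (a + n * w)).indicator 1 p := by
  calc gridDensity a w M p
      ≤ ∑ i : Fin n, ∑ j : Fin n,
          c * ((gridCell a w i).indicator 1 p.1 * (gridCell a w j).indicator 1 p.2) :=
        Finset.sum_le_sum fun i _ => Finset.sum_le_sum fun j _ => mul_le_mul_of_nonneg_right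
          (hM i j) (mul_nonneg (indicator_nonneg (fun _ _ => zero_le_one) _)
            (indicator_nonneg (fun _ _ => zero_le_one) _))
    _ = c * ((∑ i : Fin n, (gridCell a w i).indicator 1 p.1) *
          ∑ j : Fin n, (gridCell a w j).indicator 1 p.2) := by
        rw [Finset.sum_mul_sum, Finset.mul_sum]
        simp only [Finset.mul_sum]
    _ = c * (Ico a (a + n * w) ×ˢ Ico a (a + n * w)).indicator 1 p := by
        rw [Fin.sum_univ_eq_sum_range (fun i => (gridCell a w i).indicator 1 p.1),
          Fin.sum_univ_eq_sum_range (fun i => (gridCell a w i).indicator 1 p.2),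
          sum_indicator_gridCell hw, sum_indicator_gridCell hw, ← indicator_prod_one]

lemma integral_halfSqDist_mul_gridCell (hw : 0 ≤ w) (i j : ℕ) :
    ∫ p : ℝ × ℝ, 1 / 2 * |p.1 - p.2| ^ 2 *
        ((gridCell a w i).indicator 1 p.1 * (gridCell a w j).indicator 1 p.2)
      = w ^ 4 / 2 * (((i : ℝ) - j) ^ 2 + 1 / 6) := by
  rw [gridCell, gridCell, integral_halfSqDist_mul_indicator_Ico_prod (by nlinarith) (by nlinarith)]
  ring

lemma Icost1_halfSqDist_gridDensity (hw : 0 ≤ w) (M : Matrix (Fin n) (Fin n) ℝ) :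
    Icost1 (fun p => 1 / 2 * |p.1 - p.2| ^ 2) (gridDensity a w M)
      = w ^ 4 / 2 * ∑ i, ∑ j, M i j * (((i : ℝ) - j) ^ 2 + 1 / 6) := by
  have hint (i j : Fin n) : Integrable fun p : ℝ × ℝ => M i j * (1 / 2 * |p.1 - p.2| ^ 2 *
      ((gridCell a w i).indicator 1 p.1 * (gridCell a w j).indicator 1 p.2)) :=
    (integrable_halfSqDist_mul_indicator_Ico_prod _ _ _ _).const_mul _
  simp only [Icost1, gridDensity, Finset.mul_sum, mul_left_comm _ (M _ _)]
  rw [integral_finsetSum _ fun i _ => integrable_finsetSum _ fun j _ => hint i j]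
  refine Finset.sum_congr rfl fun i _ => ?_
  rw [integral_finsetSum _ fun j _ => hint i j]
  refine Finset.sum_congr rfl fun j _ => ?_
  rw [integral_const_mul, integral_halfSqDist_mul_gridCell hw]

lemma inGammaBar1_gridDensity (hw : 0 ≤ w) {b c : ℝ} (hb : a + n * w = b) (hc : 0 ≤ c)
    {M : Matrix (Fin n) (Fin n) ℝ} (hM0 : ∀ i j, 0 ≤ M i j) (hMc : ∀ i j, M i j ≤ c)
    (hrow : ∀ i, w * ∑ j, M i j = 1) (hcol : ∀ j, w * ∑ i, M i j = 1) :
    InGammaBar1 ((Icc a b).indicator fun _ => 1) ((Icc a b).indicator fun _ => 1)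
      ((Icc a b ×ˢ Icc a b).indicator fun _ => c) (gridDensity a w M) := by
  subst hb
  have hIco : (Ico a (a + n * w)).indicator (1 : ℝ → ℝ) =ᵐ[volume]
      (Icc a (a + n * w)).indicator fun _ => 1 := indicator_ae_eq_of_ae_eq_set Ico_ae_eq_Icc
  refine ⟨⟨integrable_gridDensity a w M, ae_of_all _ (gridDensity_nonneg hM0), ?_, ?_⟩,
    ae_of_all _ fun p => (gridDensity_le hw hMc p).trans ?_⟩
  · filter_upwards [hIco] with x hx
    rw [integral_gridDensity_snd_of_sum_row hw hrow, hx]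
  · filter_upwards [hIco] with y hy
    simp_rw [← gridDensity_transpose M]
    rw [integral_gridDensity_snd_of_sum_row (M := M.transpose) hw hcol, hy]
  · rw [← smul_eq_mul, smul_indicator_one_apply]
    exact indicator_le_indicator_of_subset
      (Set.prod_mono Ico_subset_Icc_self Ico_subset_Icc_self) (fun _ => hc) p

lemma gridDensity_smul_one (hw : 0 ≤ w) (c : ℝ) :
    gridDensity a w (c • 1 : Matrix (Fin n) (Fin n) ℝ) =
      (⋃ i ∈ Finset.range n, gridCell a w i ×ˢ gridCell a w i).indicator fun _ => c := by
  funext ⟨x, y⟩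
  have hdisj :
      (Finset.range n : Set ℕ).PairwiseDisjoint fun i => gridCell a w i ×ˢ gridCell a w i :=
    fun i _ j _ hij => (pairwise_disjoint_gridCell hw hij).set_prod_left _ _
  rw [Finset.indicator_biUnion_apply _ _ hdisj, ← Fin.sum_univ_eq_sum_range]
  simp only [gridDensity, Matrix.smul_apply, Matrix.one_apply, smul_eq_mul, mul_ite, mul_one,
    mul_zero, ite_mul, zero_mul, Finset.sum_ite_eq, Finset.mem_univ, ↓reduceIte,
    ← smul_indicator_one_apply, indicator_prod_one]

end Grid

lemma indicator_fourSquares_ae_eq :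
    (((Icc (-(1/2) : ℝ) (-(1/4)) ×ˢ Icc (-(1/2) : ℝ) (-(1/4))) ∪
        (Icc (-(1/4) : ℝ) 0 ×ˢ Icc (-(1/4) : ℝ) 0) ∪
        (Icc (0 : ℝ) (1/4) ×ˢ Icc (0 : ℝ) (1/4)) ∪
        (Icc (1/4 : ℝ) (1/2) ×ˢ Icc (1/4 : ℝ) (1/2))).indicator fun _ => 4)
      =ᵐ[volume] gridDensity (-(1/2)) (1/4) ((4 : ℝ) • 1 : Matrix (Fin 4) (Fin 4) ℝ) := by
  have hcells :
      (⋃ i ∈ Finset.range 4, gridCell (-(1/2)) (1/4) i ×ˢ gridCell (-(1/2)) (1/4) i) =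
      (Ico (-(1/2) : ℝ) (-(1/4)) ×ˢ Ico (-(1/2) : ℝ) (-(1/4))) ∪
        (Ico (-(1/4) : ℝ) 0 ×ˢ Ico (-(1/4) : ℝ) 0) ∪
        (Ico (0 : ℝ) (1/4) ×ˢ Ico (0 : ℝ) (1/4)) ∪
        (Ico (1/4 : ℝ) (1/2) ×ˢ Ico (1/4 : ℝ) (1/2)) := by
    rw [show Finset.range 4 = {0, 1, 2, 3} from rfl]
    simp only [Finset.set_biUnion_insert, Finset.set_biUnion_singleton, gridCell, union_assoc]
    norm_num
  have hsquare (s t : ℝ) : Icc s t ×ˢ Icc s t =ᵐ[volume] Ico s t ×ˢ Ico s t := by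
    rw [Measure.volume_eq_prod]
    exact Measure.set_prod_ae_eq Ico_ae_eq_Icc.symm Ico_ae_eq_Icc.symm
  rw [gridDensity_smul_one (by norm_num), hcells]
  exact indicator_ae_eq_of_ae_eq_set (ae_eq_set_union (ae_eq_set_union (ae_eq_set_union
    (hsquare _ _) (hsquare _ _)) (hsquare _ _)) (hsquare _ _))

lemma Icost1_halfSqDist_fourSquares :
    Icost1 (fun p => 1 / 2 * |p.1 - p.2| ^ 2)
      (gridDensity (-(1/2)) (1/4) ((4 : ℝ) • 1 : Matrix (Fin 4) (Fin 4) ℝ)) = 1 / 192 := by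
  rw [Icost1_halfSqDist_gridDensity (by norm_num)]
  simp only [Matrix.smul_apply, Matrix.one_apply, smul_eq_mul, mul_ite, mul_one, mul_zero, ite_mul,
    zero_mul, Finset.sum_ite_eq, Finset.mem_univ, if_true, sub_self]
  norm_num

lemma inGammaBar1_fourSquaresGrid :
    InGammaBar1 ((Icc (-(1/2) : ℝ) (1/2)).indicator fun _ => 1)
      ((Icc (-(1/2) : ℝ) (1/2)).indicator fun _ => 1)
      ((Icc (-(1/2) : ℝ) (1/2) ×ˢ Icc (-(1/2) : ℝ) (1/2)).indicator fun _ => 4)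
      (gridDensity (-(1/2)) (1/4) ((4 : ℝ) • 1 : Matrix (Fin 4) (Fin 4) ℝ)) := by
  refine inGammaBar1_gridDensity (by norm_num) (by norm_num) (by norm_num)
    (fun i j => ?_) (fun i j => ?_) (fun i => ?_) (fun j => ?_) <;>
    simp only [Matrix.smul_apply, Matrix.one_apply, smul_eq_mul, mul_ite, mul_one, mul_zero,
      Finset.sum_ite_eq, Finset.sum_ite_eq', Finset.mem_univ, if_true]
  · positivity
  · split_ifs <;> norm_num
  · norm_num
  · norm_num

-- The tridiagonal band with its diagonal cells 2 and 9 traded for the corner cells (0, 2),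
-- (2, 0), (9, 11), (11, 9), so that every row and every column has exactly three cells.
def bandPattern : Fin 12 → Fin 12 → ℕ := ![
  ![1, 1, 1, 0, 0, 0, 0, 0, 0, 0, 0, 0],
  ![1, 1, 1, 0, 0, 0, 0, 0, 0, 0, 0, 0],
  ![1, 1, 0, 1, 0, 0, 0, 0, 0, 0, 0, 0],
  ![0, 0, 1, 1, 1, 0, 0, 0, 0, 0, 0, 0],
  ![0, 0, 0, 1, 1, 1, 0, 0, 0, 0, 0, 0],
  ![0, 0, 0, 0, 1, 1, 1, 0, 0, 0, 0, 0],
  ![0, 0, 0, 0, 0, 1, 1, 1, 0, 0, 0, 0],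
  ![0, 0, 0, 0, 0, 0, 1, 1, 1, 0, 0, 0],
  ![0, 0, 0, 0, 0, 0, 0, 1, 1, 1, 0, 0],
  ![0, 0, 0, 0, 0, 0, 0, 0, 1, 0, 1, 1],
  ![0, 0, 0, 0, 0, 0, 0, 0, 0, 1, 1, 1],
  ![0, 0, 0, 0, 0, 0, 0, 0, 0, 1, 1, 1]]

def bandDensity : ℝ × ℝ → ℝ :=
  gridDensity (-(1/2)) (1/12) (Matrix.of fun i j => 4 * (bandPattern i j : ℝ))

lemma bandPattern_le_one : ∀ i j, bandPattern i j ≤ 1 := by decide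

lemma sum_bandPattern_row : ∀ i, ∑ j, bandPattern i j = 3 := by decide

lemma sum_bandPattern_col : ∀ j, ∑ i, bandPattern i j = 3 := by decide

lemma sum_bandPattern : ∑ i, ∑ j, bandPattern i j = 36 := by decide

lemma sum_bandPattern_mul_sq_dist :
    ∑ i, ∑ j, (bandPattern i j : ℤ) * ((i : ℤ) - j) ^ 2 = 38 := by decide

lemma inGammaBar1_band :
    InGammaBar1 ((Icc (-(1/2) : ℝ) (1/2)).indicator fun _ => 1)
      ((Icc (-(1/2) : ℝ) (1/2)).indicator fun _ => 1)
      ((Icc (-(1/2) : ℝ) (1/2) ×ˢ Icc (-(1/2) : ℝ) (1/2)).indicator fun _ => 4)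
      bandDensity := by
  refine inGammaBar1_gridDensity (by norm_num) (by norm_num) (by norm_num)
    (fun i j => ?_) (fun i j => ?_) (fun i => ?_) (fun j => ?_) <;> simp only [Matrix.of_apply]
  · positivity
  · have : (bandPattern i j : ℝ) ≤ 1 := by exact_mod_cast bandPattern_le_one i j
    linarith
  · rw [← Finset.mul_sum, ← Nat.cast_sum, sum_bandPattern_row]
    norm_num
  · rw [← Finset.mul_sum, ← Nat.cast_sum, sum_bandPattern_col]
    norm_num

lemma Icost1_halfSqDist_band :
    Icost1 (fun p => 1 / 2 * |p.1 - p.2| ^ 2) bandDensity = 11 / 2592 := by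
  have hdist : ∑ i : Fin 12, ∑ j : Fin 12, (bandPattern i j : ℝ) * ((i : ℝ) - j) ^ 2 = 38 := by
    exact_mod_cast sum_bandPattern_mul_sq_dist
  have hmass : ∑ i : Fin 12, ∑ j : Fin 12, (bandPattern i j : ℝ) = 36 := by
    exact_mod_cast sum_bandPattern
  rw [bandDensity, Icost1_halfSqDist_gridDensity (by norm_num)]
  have hsplit :
      ∑ i : Fin 12, ∑ j : Fin 12, 4 * (bandPattern i j : ℝ) * (((i : ℝ) - j) ^ 2 + 1 / 6)
        = 4 * ∑ i : Fin 12, ∑ j : Fin 12, (bandPattern i j : ℝ) * ((i : ℝ) - j) ^ 2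
          + 2 / 3 * ∑ i : Fin 12, ∑ j : Fin 12, (bandPattern i j : ℝ) := by
    simp only [Finset.mul_sum, ← Finset.sum_add_distrib]
    exact Finset.sum_congr rfl fun i _ => Finset.sum_congr rfl fun j _ => by ring
  simp only [Matrix.of_apply, hsplit, hdist, hmass]
  norm_num

theorem four_squares_not_optimal :
    InGammaBar1 ((Set.Icc (-(1/2) : ℝ) (1/2)).indicator fun _ => 1)
      ((Set.Icc (-(1/2) : ℝ) (1/2)).indicator fun _ => 1)
      ((Set.Icc (-(1/2) : ℝ) (1/2) ×ˢ Set.Icc (-(1/2) : ℝ) (1/2)).indicator fun _ => 4)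
      (((Set.Icc (-(1/2) : ℝ) (-(1/4)) ×ˢ Set.Icc (-(1/2) : ℝ) (-(1/4))) ∪
        (Set.Icc (-(1/4) : ℝ) 0 ×ˢ Set.Icc (-(1/4) : ℝ) 0) ∪
        (Set.Icc (0 : ℝ) (1/4) ×ˢ Set.Icc (0 : ℝ) (1/4)) ∪
        (Set.Icc (1/4 : ℝ) (1/2) ×ˢ Set.Icc (1/4 : ℝ) (1/2))).indicator fun _ => 4) ∧
    ∃ k, InGammaBar1 ((Set.Icc (-(1/2) : ℝ) (1/2)).indicator fun _ => 1)
        ((Set.Icc (-(1/2) : ℝ) (1/2)).indicator fun _ => 1)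
        ((Set.Icc (-(1/2) : ℝ) (1/2) ×ˢ Set.Icc (-(1/2) : ℝ) (1/2)).indicator fun _ => 4) k ∧
      Icost1 (fun p => (1/2) * |p.1 - p.2| ^ 2) k <
        Icost1 (fun p => (1/2) * |p.1 - p.2| ^ 2)
          ((((Set.Icc (-(1/2) : ℝ) (-(1/4)) ×ˢ Set.Icc (-(1/2) : ℝ) (-(1/4))) ∪
            (Set.Icc (-(1/4) : ℝ) 0 ×ˢ Set.Icc (-(1/4) : ℝ) 0) ∪
            (Set.Icc (0 : ℝ) (1/4) ×ˢ Set.Icc (0 : ℝ) (1/4)) ∪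
            (Set.Icc (1/4 : ℝ) (1/2) ×ˢ Set.Icc (1/4 : ℝ) (1/2))).indicator fun _ => 4)) := by
  have hfour := indicator_fourSquares_ae_eq
  refine ⟨inGammaBar1_fourSquaresGrid.congr_ae hfour.symm, bandDensity, inGammaBar1_band, ?_⟩
  rw [Icost1_congr_ae _ hfour, Icost1_halfSqDist_band, Icost1_halfSqDist_fourSquares]
  norm_num
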